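/- arXiv:1110.0402 — 4 statements merged into one kernel-verified Lean document; each statement's English description precedes it below -/
import Mathlib

section
/- Let V be a finite set of points in ℝ² contained in the closed annulus {x : 2 ≤ ‖x‖ ≤ 2.52}, with ‖u - v‖ ≥ 2 for all distinct u, v ∈ V. Then ∑_{v ∈ V} L(‖v‖/2) ≤ 6, where L(h) = (1.26 - h)/0.26 for h ≤ 1.26 and 0 otherwise. Equality holds if and only if V is the vertex set of a regular hexagon of circumradius 2 centered at the origin. -/
/-!
Sort the points by argument. If consecutive points have norms `r, s` and angular gap `θ`, the
separation `‖u - v‖ ≥ 2` and the law of cosines give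
`cos θ ≤ (r² + s² - 4) / (2rs) ≤ 1 - (L(r/2) + L(s/2)) / 4`, and since `cos` lies above its chord
on `[0, π/3]` this forces `θ ≥ π (L(r/2) + L(s/2)) / 6`. The gaps add up to `2π`, so
`π/3 · ∑ L(‖v‖/2) ≤ 2π`. In the equality case every gap is tight, which happens only for
`r = s = 2` and `θ = π/3`: the points form a regular hexagon of circumradius 2.
-/

noncomputable def Ltrunc (h : ℝ) : ℝ :=
  if h ≤ 1.26 then (1.26 - h) / 0.26 else 0

open Real Finset
open Complex (arg I)

lemma Ltrunc_nonneg (h : ℝ) : 0 ≤ Ltrunc h := by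
  unfold Ltrunc; split_ifs
  · apply div_nonneg <;> linarith
  · rfl

lemma Ltrunc_le_one {h : ℝ} (hh : 1 ≤ h) : Ltrunc h ≤ 1 := by
  unfold Ltrunc; split_ifs
  · rw [div_le_one (by norm_num)]; linarith
  · norm_num

lemma Ltrunc_lt_one {h : ℝ} (hh : 1 < h) : Ltrunc h < 1 := by
  unfold Ltrunc; split_ifs
  · rw [div_lt_one (by norm_num)]; linarith
  · norm_num

lemma Ltrunc_one : Ltrunc 1 = 1 := by norm_num [Ltrunc]

lemma eq_one_of_Ltrunc_eq_one {h : ℝ} (hh : 1 ≤ h) (h1 : Ltrunc h = 1) : h = 1 := by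
  by_contra hne
  exact (Ltrunc_lt_one (lt_of_le_of_ne hh (Ne.symm hne))).ne h1

lemma sq_add_sq_sub_four_le {r s : ℝ} (hr : 2 ≤ r) (hr' : r ≤ 2.52) (hs : 2 ≤ s) (hs' : s ≤ 2.52) :
    r ^ 2 + s ^ 2 - 4 ≤ 2 * r * s * (1 - (Ltrunc (r / 2) + Ltrunc (s / 2)) / 4) := by
  have hL : ∀ t ≤ (2.52 : ℝ), Ltrunc (t / 2) = (63 - 25 * t) / 13 := fun t ht => by
    rw [Ltrunc, if_pos (by linarith)]; ring
  rw [hL r hr', hL s hs']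
  nlinarith [mul_nonneg (mul_nonneg (sub_nonneg.2 hr) (sub_nonneg.2 hs))
    (by linarith : (0:ℝ) ≤ (r - 2) + (s - 2)), mul_nonneg (sub_nonneg.2 hr) (sub_nonneg.2 hs),
    sq_nonneg (r - s)]

lemma one_sub_div_four_lt_cos {s : ℝ} (h0 : 0 < s) (h2 : s < 2) : 1 - s / 4 < cos (π * s / 6) := by
  have hmem : ∀ x ∈ Set.Icc (0 : ℝ) (π / 3), x ∈ Set.Icc (-(π / 2)) (π / 2) := fun x hx =>
    ⟨by linarith [hx.1, pi_pos], by linarith [hx.2, pi_pos]⟩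
  calc 1 - s / 4 = (1 - s / 2) * cos 0 + (s / 2) * cos (π / 3) := by
        rw [cos_zero, cos_pi_div_three]; ring
    _ < cos ((1 - s / 2) * 0 + (s / 2) * (π / 3)) :=
        strictConcaveOn_cos_Icc.2 (hmem 0 (by simp; positivity))
          (hmem (π / 3) (by simp; positivity)) (by positivity) (by linarith) (by linarith) (by ring)
    _ = cos (π * s / 6) := by ring_nf

lemma one_sub_div_four_le_cos {s : ℝ} (h0 : 0 ≤ s) (h2 : s ≤ 2) : 1 - s / 4 ≤ cos (π * s / 6) := by
  rcases h0.eq_or_lt with rfl | h0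
  · simp
  rcases h2.eq_or_lt with rfl | h2
  · rw [show π * 2 / 6 = π / 3 by ring, cos_pi_div_three]; norm_num
  exact (one_sub_div_four_lt_cos h0 h2).le

lemma pi_mul_div_six_le_of_cos_le {S θ : ℝ} (hS0 : 0 ≤ S) (hS2 : S ≤ 2) (hθ : 0 < θ)
    (hcos : cos θ ≤ 1 - S / 4) : π * S / 6 ≤ θ := by
  by_contra! hlt
  have hθπ : θ ≤ π := by nlinarith [pi_pos]
  have := strictAntiOn_cos ⟨hθ.le, hθπ⟩ ⟨by positivity, by nlinarith [pi_pos]⟩ hlt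
  linarith [one_sub_div_four_le_cos hS0 hS2]

lemma eq_zero_or_eq_two_of_cos_le {S : ℝ} (hS0 : 0 ≤ S) (hS2 : S ≤ 2)
    (hcos : cos (π * S / 6) ≤ 1 - S / 4) : S = 0 ∨ S = 2 := by
  by_contra! h
  linarith [one_sub_div_four_lt_cos (hS0.lt_of_ne' h.1) (hS2.lt_of_ne h.2)]

lemma norm_mul_norm_mul_cos_arg_sub (u v : ℂ) :
    ‖u‖ * ‖v‖ * cos (arg v - arg u) = (‖u‖ ^ 2 + ‖v‖ ^ 2 - ‖v - u‖ ^ 2) / 2 := by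
  have hu := Complex.norm_mul_cos_arg u
  have hv := Complex.norm_mul_cos_arg v
  have hu' := Complex.norm_mul_sin_arg u
  have hv' := Complex.norm_mul_sin_arg v
  rw [cos_sub]
  simp only [Complex.sq_norm, Complex.normSq_apply, Complex.sub_re, Complex.sub_im]
  linear_combination (‖v‖ * cos (arg v)) * hu + u.re * hv + (‖v‖ * sin (arg v)) * hu' + u.im * hv'

lemma cos_arg_sub_le {u v : ℂ} (hu : 2 ≤ ‖u‖ ∧ ‖u‖ ≤ 2.52) (hv : 2 ≤ ‖v‖ ∧ ‖v‖ ≤ 2.52)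
    (huv : 2 ≤ ‖v - u‖) :
    cos (arg v - arg u) ≤ 1 - (Ltrunc (‖u‖ / 2) + Ltrunc (‖v‖ / 2)) / 4 := by
  have hpos : 0 < ‖u‖ * ‖v‖ := by nlinarith
  refine le_of_mul_le_mul_left ?_ hpos
  calc ‖u‖ * ‖v‖ * cos (arg v - arg u) = (‖u‖ ^ 2 + ‖v‖ ^ 2 - ‖v - u‖ ^ 2) / 2 :=
        norm_mul_norm_mul_cos_arg_sub u v
    _ ≤ (‖u‖ ^ 2 + ‖v‖ ^ 2 - 4) / 2 := by nlinarith
    _ ≤ _ := by linarith [sq_add_sq_sub_four_le hu.1 hu.2 hv.1 hv.2]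

lemma pi_mul_div_six_le_of_cos_eq_cos_arg_sub {u v : ℂ} {θ : ℝ} (hu : 2 ≤ ‖u‖ ∧ ‖u‖ ≤ 2.52)
    (hv : 2 ≤ ‖v‖ ∧ ‖v‖ ≤ 2.52) (huv : 2 ≤ ‖v - u‖) (hθ : 0 < θ)
    (hcos : cos θ = cos (arg v - arg u)) :
    π * (Ltrunc (‖u‖ / 2) + Ltrunc (‖v‖ / 2)) / 6 ≤ θ := by
  have hLu := Ltrunc_le_one (by linarith : 1 ≤ ‖u‖ / 2)
  have hLv := Ltrunc_le_one (by linarith : 1 ≤ ‖v‖ / 2)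
  exact pi_mul_div_six_le_of_cos_le (add_nonneg (Ltrunc_nonneg _) (Ltrunc_nonneg _))
    (by linarith) hθ (hcos ▸ cos_arg_sub_le hu hv huv)

lemma norm_eq_two_of_cos_eq_cos_arg_sub {u v : ℂ} {θ : ℝ} (hu : 2 ≤ ‖u‖ ∧ ‖u‖ ≤ 2.52)
    (hv : 2 ≤ ‖v‖ ∧ ‖v‖ ≤ 2.52) (huv : 2 ≤ ‖v - u‖) (hθ : 0 < θ)
    (hcos : cos θ = cos (arg v - arg u))
    (heq : θ = π * (Ltrunc (‖u‖ / 2) + Ltrunc (‖v‖ / 2)) / 6) : ‖u‖ = 2 ∧ ‖v‖ = 2 := by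
  have hLu := Ltrunc_le_one (by linarith : 1 ≤ ‖u‖ / 2)
  have hLv := Ltrunc_le_one (by linarith : 1 ≤ ‖v‖ / 2)
  have hS := eq_zero_or_eq_two_of_cos_le (add_nonneg (Ltrunc_nonneg _) (Ltrunc_nonneg _))
    (by linarith) (heq ▸ hcos ▸ cos_arg_sub_le hu hv huv)
  rcases hS with hS | hS
  · rw [hS] at heq; linarith
  constructor
  · linarith [eq_one_of_Ltrunc_eq_one (by linarith : 1 ≤ ‖u‖ / 2) (by linarith)]
  · linarith [eq_one_of_Ltrunc_eq_one (by linarith : 1 ≤ ‖v‖ / 2) (by linarith)]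

lemma Fin.sum_comp_add_one {M : Type*} [AddCommMonoid M] {n : ℕ} (f : Fin (n + 1) → M) :
    ∑ k, f (k + 1) = ∑ k, f k :=
  Fintype.sum_equiv (Equiv.addRight 1) _ _ fun _ => rfl

def cyclicGap {n : ℕ} (T : ℝ) (a : Fin (n + 1) → ℝ) (k : Fin (n + 1)) : ℝ :=
  a (k + 1) - a k + if k = Fin.last n then T else 0

section cyclicGap

variable {n : ℕ} {T : ℝ} {a : Fin (n + 1) → ℝ}

lemma sum_cyclicGap : ∑ k, cyclicGap T a k = T := by
  simp only [cyclicGap, sum_add_distrib, sum_sub_distrib, sum_ite_eq', mem_univ, if_true]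
  rw [Fin.sum_comp_add_one a, sub_self, zero_add]

lemma cyclicGap_pos (ha : StrictMono a) (hT : a (Fin.last n) - a 0 < T) (k : Fin (n + 1)) :
    0 < cyclicGap T a k := by
  unfold cyclicGap
  split_ifs with hk
  · rw [hk, Fin.last_add_one]; linarith
  · linarith [ha (Fin.lt_add_one_iff.2 (lt_of_le_of_ne (Fin.le_last k) hk))]

lemma cos_cyclicGap (a : Fin (n + 1) → ℝ) (k : Fin (n + 1)) :
    cos (cyclicGap (2 * π) a k) = cos (a (k + 1) - a k) := by
  unfold cyclicGap; split_ifs <;> simp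

lemma eq_add_mul_of_cyclicGap_eq {c : ℝ} (h : ∀ k, cyclicGap T a k = c) (k : Fin (n + 1)) :
    a k = a 0 + k * c := by
  induction k using Fin.induction with
  | zero => simp
  | succ i ih =>
    have hi := h i.castSucc
    rw [cyclicGap, Fin.coeSucc_eq_succ, if_neg (Fin.castSucc_ne_last i)] at hi
    rw [Fin.val_castSucc] at ih
    rw [Fin.val_succ]; push_cast; linarith

end cyclicGap

noncomputable def hexagon (u : ℂ) : Finset ℂ :=
  Finset.univ.image (fun k : Fin 6 => Complex.exp ((k : ℕ) * (Real.pi / 3) * Complex.I) * u)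

lemma hexagon_injective {u : ℂ} (hu : u ≠ 0) :
    Function.Injective fun k : Fin 6 => Complex.exp ((k : ℕ) * (Real.pi / 3) * Complex.I) * u := by
  have hζ (k : ℕ) : Complex.exp (k * (π / 3) * I) = Complex.exp (2 * π * I / (6 : ℕ)) ^ k := by
    rw [← Complex.exp_nat_mul]; push_cast; ring_nf
  intro j k h
  exact Fin.ext <| (Complex.isPrimitiveRoot_exp 6 (by norm_num)).pow_inj j.2 k.2 <| by
    rw [← hζ, ← hζ]; exact mul_right_cancel₀ hu h

lemma sum_Ltrunc_hexagon {u : ℂ} (hu : ‖u‖ = 2) :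
    ∑ v ∈ hexagon u, Ltrunc (‖v‖ / 2) = 6 := by
  have hu0 : u ≠ 0 := norm_ne_zero_iff.1 (hu ▸ two_ne_zero)
  rw [hexagon, sum_image fun j _ k _ h => hexagon_injective hu0 h]
  simp [Complex.norm_exp, hu, Ltrunc_one]

lemma Finset.exists_image_eq_strictMono_comp {α β : Type*} [DecidableEq α] [LinearOrder β]
    (s : Finset α) (f : α → β) (hf : Set.InjOn f s) {m : ℕ} (hs : s.card = m) :
    ∃ e : Fin m → α, univ.image e = s ∧ StrictMono (f ∘ e) := by
  have hcard : (s.image f).card = m := by rw [card_image_of_injOn hf, hs]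
  set g := (s.image f).orderEmbOfFin hcard
  have hg : ∀ k, ∃ x ∈ s, f x = g k := fun k => mem_image.1 (orderEmbOfFin_mem _ hcard k)
  choose e hes hfe using hg
  have hmono : StrictMono (f ∘ e) := (funext hfe : f ∘ e = g) ▸ g.strictMono
  refine ⟨e, eq_of_subset_of_card_le (image_subset_iff.2 fun k _ => hes k) ?_, hmono⟩
  rw [card_image_of_injective _ hmono.injective.of_comp, card_univ, Fintype.card_fin, hs]

section Sorted

variable {n : ℕ} {e : Fin (n + 1) → ℂ}

lemma sum_pi_mul_add_div_six (w : Fin (n + 1) → ℝ) :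
    ∑ k, π * (w k + w (k + 1)) / 6 = π / 3 * ∑ k, w k := by
  rw [← sum_div, ← mul_sum, sum_add_distrib, Fin.sum_comp_add_one w]; ring

lemma cyclicGap_arg_pos (hmono : StrictMono fun k => arg (e k)) (k : Fin (n + 1)) :
    0 < cyclicGap (2 * π) (fun k => arg (e k)) k :=
  cyclicGap_pos hmono
    (by linarith [Complex.arg_le_pi (e (Fin.last n)), Complex.neg_pi_lt_arg (e 0)]) k

lemma pi_mul_div_six_le_cyclicGap (hann : ∀ k, 2 ≤ ‖e k‖ ∧ ‖e k‖ ≤ 2.52)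
    (hsep : ∀ k, 2 ≤ ‖e (k + 1) - e k‖) (hmono : StrictMono fun k => arg (e k)) (k : Fin (n + 1)) :
    π * (Ltrunc (‖e k‖ / 2) + Ltrunc (‖e (k + 1)‖ / 2)) / 6 ≤
      cyclicGap (2 * π) (fun k => arg (e k)) k :=
  pi_mul_div_six_le_of_cos_eq_cos_arg_sub (hann k) (hann (k + 1)) (hsep k)
    (cyclicGap_arg_pos hmono k) (cos_cyclicGap _ k)

theorem sum_Ltrunc_le_six_of_sorted (hann : ∀ k, 2 ≤ ‖e k‖ ∧ ‖e k‖ ≤ 2.52)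
    (hsep : ∀ k, 2 ≤ ‖e (k + 1) - e k‖) (hmono : StrictMono fun k => arg (e k)) :
    ∑ k, Ltrunc (‖e k‖ / 2) ≤ 6 := by
  have h := sum_le_sum fun k (_ : k ∈ univ) => pi_mul_div_six_le_cyclicGap hann hsep hmono k
  rw [sum_cyclicGap, sum_pi_mul_add_div_six fun k => Ltrunc (‖e k‖ / 2)] at h
  nlinarith [pi_pos]

theorem exists_image_eq_hexagon_of_sorted (hann : ∀ k, 2 ≤ ‖e k‖ ∧ ‖e k‖ ≤ 2.52)
    (hsep : ∀ k, 2 ≤ ‖e (k + 1) - e k‖) (hmono : StrictMono fun k => arg (e k))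
    (h6 : ∑ k, Ltrunc (‖e k‖ / 2) = 6) :
    ∃ u : ℂ, ‖u‖ = 2 ∧ univ.image e = hexagon u := by
  set a := fun k => arg (e k)
  set bound := fun k => π * (Ltrunc (‖e k‖ / 2) + Ltrunc (‖e (k + 1)‖ / 2)) / 6
  have hle : ∀ k ∈ univ, 0 ≤ cyclicGap (2 * π) a k - bound k := fun k _ =>
    sub_nonneg.2 (pi_mul_div_six_le_cyclicGap hann hsep hmono k)
  have hsum : ∑ k, (cyclicGap (2 * π) a k - bound k) = 0 := by
    rw [sum_sub_distrib, sum_cyclicGap, sum_pi_mul_add_div_six fun k => Ltrunc (‖e k‖ / 2), h6]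
    ring
  have htight : ∀ k, cyclicGap (2 * π) a k = bound k := fun k =>
    sub_eq_zero.1 ((sum_eq_zero_iff_of_nonneg hle).1 hsum k (mem_univ k))
  have hnorm : ∀ k, ‖e k‖ = 2 := fun k =>
    (norm_eq_two_of_cos_eq_cos_arg_sub (hann k) (hann (k + 1)) (hsep k)
      (cyclicGap_arg_pos hmono k) (cos_cyclicGap _ k) (htight k)).1
  have hL : ∀ k, Ltrunc (‖e k‖ / 2) = 1 := fun k => by norm_num [hnorm k, Ltrunc_one]
  have hgap : ∀ k, cyclicGap (2 * π) a k = π / 3 := fun k => by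
    rw [htight k]; simp only [bound, hL]; ring
  obtain rfl : n = 5 := by
    simp only [hL, sum_const, card_univ, Fintype.card_fin, nsmul_eq_mul, mul_one] at h6
    exact Nat.succ_injective (by exact_mod_cast h6)
  have hpolar : ∀ k, e k = 2 * Complex.exp (a k * I) := fun k => by
    simpa [hnorm k] using (Complex.norm_mul_exp_arg_mul_I (e k)).symm
  refine ⟨e 0, hnorm 0, ?_⟩
  unfold hexagon
  congr 1
  funext k
  rw [hpolar k, hpolar 0, eq_add_mul_of_cyclicGap_eq hgap k]
  push_cast
  rw [mul_left_comm, ← Complex.exp_add]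
  ring_nf

end Sorted

lemma arg_injOn_of_annulus {V : Finset ℂ} (hann : ∀ v ∈ V, 2 ≤ ‖v‖ ∧ ‖v‖ ≤ 2.52)
    (hsep : ∀ u ∈ V, ∀ v ∈ V, u ≠ v → 2 ≤ ‖u - v‖) : Set.InjOn arg V := by
  intro u hu v hv h
  by_contra hne
  have hray : SameRay ℝ u v := Complex.sameRay_iff.2 (Or.inr (Or.inr h))
  have hdist := hsep u hu v hv hne
  rw [hray.norm_sub] at hdist
  have : |‖u‖ - ‖v‖| ≤ 0.52 := abs_le.2
    ⟨by linarith [hann u hu, hann v hv], by linarith [hann u hu, hann v hv]⟩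
  linarith

theorem sum_Ltrunc_le_six_and_exists_hexagon (V : Finset ℂ)
    (hann : ∀ v ∈ V, 2 ≤ ‖v‖ ∧ ‖v‖ ≤ 2.52)
    (hsep : ∀ u ∈ V, ∀ v ∈ V, u ≠ v → 2 ≤ ‖u - v‖) :
    ∑ v ∈ V, Ltrunc (‖v‖ / 2) ≤ 6 ∧
      (∑ v ∈ V, Ltrunc (‖v‖ / 2) = 6 → ∃ u : ℂ, ‖u‖ = 2 ∧ V = hexagon u) := by
  -- The gap argument compares each point with a different neighbour, so it needs two points.
  obtain hcard | ⟨n, hn⟩ : V.card ≤ 1 ∨ ∃ n, V.card = n + 2 := by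
    rcases le_or_gt V.card 1 with h | h
    exacts [Or.inl h, Or.inr ⟨V.card - 2, by omega⟩]
  · have hsum : ∑ v ∈ V, Ltrunc (‖v‖ / 2) ≤ V.card := by
      simpa using sum_le_card_nsmul V _ 1 fun v hv => Ltrunc_le_one (by linarith [hann v hv])
    have : (V.card : ℝ) ≤ 1 := by exact_mod_cast hcard
    exact ⟨by linarith, fun h => by linarith⟩
  obtain ⟨e, rfl, hmono⟩ :=
    V.exists_image_eq_strictMono_comp arg (arg_injOn_of_annulus hann hsep) hn
  have he : ∀ k, e k ∈ univ.image e := fun k => mem_image_of_mem e (mem_univ k)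
  have hann' : ∀ k, 2 ≤ ‖e k‖ ∧ ‖e k‖ ≤ 2.52 := fun k => hann _ (he k)
  have hsep' : ∀ k : Fin (n + 2), 2 ≤ ‖e (k + 1) - e k‖ := fun k =>
    hsep _ (he _) _ (he _) (hmono.injective.of_comp.ne (by simp))
  rw [sum_image fun i _ j _ h => hmono.injective.of_comp h]
  exact ⟨sum_Ltrunc_le_six_of_sorted hann' hsep' hmono,
    exists_image_eq_hexagon_of_sorted hann' hsep' hmono⟩

theorem L_sum_le_six (V : Finset ℂ)
    (hann : ∀ v ∈ V, 2 ≤ ‖v‖ ∧ ‖v‖ ≤ 2.52)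
    (hsep : ∀ u ∈ V, ∀ v ∈ V, u ≠ v → 2 ≤ ‖u - v‖) :
    (∑ v ∈ V, Ltrunc (‖v‖ / 2)) ≤ 6 ∧
    ((∑ v ∈ V, Ltrunc (‖v‖ / 2)) = 6 ↔
      ∃ u : ℂ, ‖u‖ = 2 ∧
        V = Finset.image (fun k : Fin 6 => Complex.exp ((k : ℕ) * (Real.pi / 3) * Complex.I) * u)
              Finset.univ) := by
  obtain ⟨hle, heq⟩ := sum_Ltrunc_le_six_and_exists_hexagon V hann hsep
  refine ⟨hle, heq, ?_⟩
  rintro ⟨u, hu, rfl⟩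
  exact sum_Ltrunc_hexagon hu
end

section
/- Let V be a finite set of points in ℝ² contained in the closed annulus {x : 2 ≤ ‖x‖ ≤ 2.52} with exactly 7 points and pairwise distances at least 2. Then ∑_{v ∈ V} L(‖v‖/2) < 6 (strict inequality), where L(h) = (1.26 - h)/0.26 for h ≤ 1.26 and 0 otherwise. -/
/-!
Two points of norms `a, b ∈ [2, 2.52]` at distance at least `2` are seen from the origin under an
angle at least `halfGap a + halfGap b`, where `halfGap r = 0.32 + 0.16 L(r/2) = 0.48 - 4 (r - 2) / 13`:
by the law of cosines the cosine of that angle is at most `(a² + b² - 4) / (2ab)`, and this is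
below `1 - (halfGap a + halfGap b)² / 2 ≤ cos (halfGap a + halfGap b)`. Ordering the points by
argument, the angles between cyclically consecutive points sum to `2π`, so `∑ halfGap ≤ π`; with
seven points this reads `7 · 0.32 + 0.16 ∑ L ≤ π`, whence `∑ L < 6`.
-/

open Real Finset

noncomputable def halfGap (r : ℝ) : ℝ := 0.32 + 0.16 * Ltrunc (r / 2)

lemma halfGap_eq {r : ℝ} (hr : r ≤ 2.52) : halfGap r = 0.48 - 4 / 13 * (r - 2) := by
  rw [halfGap, Ltrunc, if_pos (by linarith)]
  ring

lemma sum_le_pi_of_cyclic_gaps {n : ℕ} (θ β : Fin (n + 2) → ℝ)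
    (hgap : ∀ i : Fin (n + 1), β i.castSucc + β i.succ ≤ θ i.succ - θ i.castSucc)
    (hwrap : β 0 + β (Fin.last _) ≤ 2 * π - (θ (Fin.last _) - θ 0)) :
    ∑ i, β i ≤ π := by
  have hsum := sum_le_sum fun i (_ : i ∈ univ) => hgap i
  rw [sum_add_distrib, sum_sub_distrib] at hsum
  linarith [Fin.sum_univ_castSucc β, Fin.sum_univ_succ β, Fin.sum_univ_castSucc θ,
    Fin.sum_univ_succ θ]

lemma Complex.norm_sub_sq_eq_cos_arg_sub {z w : ℂ} (hz : z ≠ 0) (hw : w ≠ 0) :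
    ‖z - w‖ ^ 2 = ‖z‖ ^ 2 + ‖w‖ ^ 2 - 2 * ‖z‖ * ‖w‖ * Real.cos (w.arg - z.arg) := by
  have hz' : ‖z‖ ≠ 0 := norm_ne_zero_iff.mpr hz
  have hw' : ‖w‖ ≠ 0 := norm_ne_zero_iff.mpr hw
  rw [Real.cos_sub, Complex.cos_arg hz, Complex.cos_arg hw, Complex.sin_arg, Complex.sin_arg]
  field_simp
  simp only [Complex.sq_norm, Complex.normSq_apply, Complex.sub_re, Complex.sub_im]
  ring

lemma Real.le_of_cos_le_cos {s δ : ℝ} (hδ : 0 ≤ δ) (hs : s ≤ π) (h : cos δ ≤ cos s) :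
    s ≤ δ := by
  by_contra! hlt
  exact (cos_lt_cos_of_nonneg_of_le_pi hδ hs hlt).not_ge h

lemma law_of_cosines_bound_le_cos_halfGap_add {a b : ℝ} (ha : 2 ≤ a) (ha' : a ≤ 2.52)
    (hb : 2 ≤ b) (hb' : b ≤ 2.52) :
    (a ^ 2 + b ^ 2 - 4) / (2 * a * b) ≤ cos (halfGap a + halfGap b) := by
  refine le_trans ?_ one_sub_sq_div_two_le_cos
  rw [halfGap_eq ha', halfGap_eq hb', div_le_iff₀ (by positivity)]
  nlinarith [mul_nonneg (sub_nonneg.2 ha) (sub_nonneg.2 hb),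
    mul_nonneg (sub_nonneg.2 ha') (sub_nonneg.2 hb'),
    mul_nonneg (sub_nonneg.2 ha) (sub_nonneg.2 hb'),
    mul_nonneg (sub_nonneg.2 ha') (sub_nonneg.2 hb),
    sq_nonneg (a - b), sq_nonneg (a + b - 4), sq_nonneg (a + b - 5.04)]

lemma halfGap_add_le_of_cos_eq {z w : ℂ} (hz : 2 ≤ ‖z‖ ∧ ‖z‖ ≤ 2.52)
    (hw : 2 ≤ ‖w‖ ∧ ‖w‖ ≤ 2.52) (hzw : 2 ≤ ‖z - w‖) (δ : ℝ) (hδ : 0 ≤ δ) (hcos : cos δ = cos (w.arg - z.arg)) :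
    halfGap ‖z‖ + halfGap ‖w‖ ≤ δ := by
  obtain ⟨hz, hz'⟩ := hz
  obtain ⟨hw, hw'⟩ := hw
  have hlaw := Complex.norm_sub_sq_eq_cos_arg_sub (z := z) (w := w)
    (norm_pos_iff.mp (by linarith)) (norm_pos_iff.mp (by linarith))
  have hcos_le : cos δ ≤ (‖z‖ ^ 2 + ‖w‖ ^ 2 - 4) / (2 * ‖z‖ * ‖w‖) := by
    rw [hcos, le_div_iff₀ (by positivity)]
    nlinarith
  refine le_of_cos_le_cos hδ ?_
    (hcos_le.trans (law_of_cosines_bound_le_cos_halfGap_add hz hz' hw hw'))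
  rw [halfGap_eq hz', halfGap_eq hw']
  linarith [pi_gt_three]

lemma sum_le_pi_of_angular_gaps {ι : Type*} (s : Finset ι) (hs : 2 ≤ #s) (θ β : ι → ℝ)
    (hgap : ∀ i ∈ s, ∀ j ∈ s, i ≠ j → θ i ≤ θ j →
      β i + β j ≤ θ j - θ i ∧ β i + β j ≤ 2 * π - (θ j - θ i)) :
    ∑ i ∈ s, β i ≤ π := by
  obtain ⟨n, hn⟩ : ∃ n, #s = n + 2 := ⟨#s - 2, by omega⟩
  let e : Fin (n + 2) ≃ s := (s.equivFinOfCardEq hn).symm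
  let σ := Tuple.sort fun k => θ (e k)
  let v : Fin (n + 2) → ι := fun k => e (σ k)
  have hv : ∀ k, v k ∈ s := fun k => (e (σ k)).2
  have hv_inj : Function.Injective v := fun k l h =>
    σ.injective (e.injective (Subtype.ext h))
  have hmono : Monotone (θ ∘ v) := Tuple.monotone_sort fun k => θ (e k)
  have hsum : ∑ i ∈ s, β i = ∑ k, β (v k) := by
    rw [← sum_coe_sort s β]
    exact ((σ.trans e).sum_comp fun x : s => β x).symm
  rw [hsum]
  refine sum_le_pi_of_cyclic_gaps (θ ∘ v) (β ∘ v) (fun k => ?_) ?_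
  · exact (hgap _ (hv _) _ (hv _) (hv_inj.ne (Fin.castSucc_lt_succ (i := k)).ne)
      (hmono (Fin.castSucc_lt_succ (i := k)).le)).1
  · exact (hgap _ (hv _) _ (hv _) (hv_inj.ne (Fin.last_pos).ne) (hmono (Fin.zero_le _))).2

lemma sum_halfGap_le_pi {ι : Type*} (s : Finset ι) (hs : 2 ≤ #s) (z : ι → ℂ)
    (hann : ∀ i ∈ s, 2 ≤ ‖z i‖ ∧ ‖z i‖ ≤ 2.52)
    (hsep : ∀ i ∈ s, ∀ j ∈ s, i ≠ j → 2 ≤ ‖z i - z j‖) :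
    ∑ i ∈ s, halfGap ‖z i‖ ≤ π := by
  refine sum_le_pi_of_angular_gaps s hs (fun i => (z i).arg) _ fun i hi j hj hij hle => ?_
  have hgap := halfGap_add_le_of_cos_eq (hann i hi) (hann j hj) (hsep i hi j hj hij)
  refine ⟨hgap _ (sub_nonneg.2 hle) rfl, hgap _ ?_ (cos_two_pi_sub _)⟩
  linarith [Complex.neg_pi_lt_arg (z i), Complex.arg_le_pi (z j)]

theorem L_sum_lt_six_of_seven (V : Finset (EuclideanSpace ℝ (Fin 2)))
    (hcard : V.card = 7)
    (hann : ∀ v ∈ V, 2 ≤ ‖v‖ ∧ ‖v‖ ≤ 2.52)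
    (hsep : ∀ u ∈ V, ∀ v ∈ V, u ≠ v → 2 ≤ ‖u - v‖) :
    (∑ v ∈ V, Ltrunc (‖v‖ / 2)) < 6 := by
  let toComplex := Complex.orthonormalBasisOneI.repr.symm
  have h := sum_halfGap_le_pi V (by omega) toComplex
    (by simpa only [LinearIsometryEquiv.norm_map] using hann)
    (by simpa only [← map_sub, LinearIsometryEquiv.norm_map] using hsep)
  simp only [halfGap, LinearIsometryEquiv.norm_map, sum_add_distrib, ← mul_sum, sum_const,
    hcard, nsmul_eq_mul] at h
  linarith [pi_lt_d2]
end

section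
/- Let V be a packing of points in ℝ³ (pairwise distances at least 2) such that for some u ∈ V, there exist twelve points u₁,...,u₁₂ ∈ V with ‖uᵢ - u‖ = 2. Assume the L12 inequality: for every w ∈ V, ∑_{v ∈ V, 2 ≤ ‖v - w‖ ≤ 2.52} L(‖v - w‖/2) ≤ 12. Then for every v ∈ V with v ≠ u, either ‖u - v‖ = 2 or ‖u - v‖ ≥ 2.52. -/
theorem kissing_twelve_gap (V : Set (EuclideanSpace ℝ (Fin 3)))
    (hpack : ∀ u ∈ V, ∀ v ∈ V, u ≠ v → 2 ≤ dist u v)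
    (u : EuclideanSpace ℝ (Fin 3)) (hu : u ∈ V)
    (w : Fin 12 → EuclideanSpace ℝ (Fin 3))
    (hwV : ∀ i, w i ∈ V) (hwinj : Function.Injective w)
    (hwu : ∀ i, dist (w i) u = 2)
    (hL12 : ∀ x ∈ V, ∀ S : Finset (EuclideanSpace ℝ (Fin 3)),
      ↑S ⊆ V → (∀ v ∈ S, 2 ≤ dist v x ∧ dist v x ≤ 2.52) →
      (∑ v ∈ S, Ltrunc (dist v x / 2)) ≤ 12) :
    ∀ v ∈ V, v ≠ u → dist u v = 2 ∨ 2.52 ≤ dist u v := by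
  intro v hv hvu
  classical
  by_contra hcon
  push_neg at hcon
  obtain ⟨hne2, hlt⟩ := hcon
  have h2 : 2 ≤ dist u v := hpack u hu v hv (fun h => hvu h.symm)
  have h2' : 2 < dist u v := lt_of_le_of_ne h2 (Ne.symm hne2)
  set T : Finset (EuclideanSpace ℝ (Fin 3)) := Finset.image w Finset.univ with hT
  have hvT : v ∉ T := by
    intro h
    rw [hT, Finset.mem_image] at h
    obtain ⟨i, _, hi⟩ := h
    have := hwu i
    rw [hi, dist_comm] at this
    exact hne2 this
  set S : Finset (EuclideanSpace ℝ (Fin 3)) := insert v T with hS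
  have hsub : ↑S ⊆ V := by
    intro x hx
    rw [hS] at hx
    simp only [Finset.coe_insert, Set.mem_insert_iff] at hx
    rcases hx with rfl | hx
    · exact hv
    · rw [hT] at hx
      simp only [Finset.coe_image, Set.mem_image] at hx
      obtain ⟨i, _, hi⟩ := hx
      exact hi ▸ hwV i
  have hdists : ∀ x ∈ S, 2 ≤ dist x u ∧ dist x u ≤ 2.52 := by
    intro x hx
    rw [hS, Finset.mem_insert] at hx
    rcases hx with rfl | hx
    · rw [dist_comm]
      constructor
      · exact h2
      · linarith
    · rw [hT, Finset.mem_image] at hx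
      obtain ⟨i, _, hi⟩ := hx
      rw [← hi, hwu i]
      norm_num
  have hkey := hL12 u hu S hsub hdists
  have hsum : ∑ x ∈ S, Ltrunc (dist x u / 2)
      = Ltrunc (dist v u / 2) + ∑ x ∈ T, Ltrunc (dist x u / 2) := by
    rw [hS, Finset.sum_insert hvT]
  have hsumT : ∑ x ∈ T, Ltrunc (dist x u / 2) = 12 := by
    rw [hT, Finset.sum_image (fun a _ b _ h => hwinj h)]
    have : ∀ i : Fin 12, Ltrunc (dist (w i) u / 2) = 1 := by
      intro i
      rw [hwu i]
      unfold Ltrunc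
      norm_num
    simp [this]
  have hpos : 0 < Ltrunc (dist v u / 2) := by
    unfold Ltrunc
    rw [dist_comm v u]
    rw [if_pos (by linarith)]
    have h1 : dist u v / 2 < 1.26 := by linarith
    have h0 : (0:ℝ) < 1.26 - dist u v / 2 := by linarith
    exact div_pos h0 (by norm_num)
  rw [hsum, hsumT] at hkey
  linarith
end

section
/- If the L12 inequality holds — i.e., for every finite packing V contained in the closed annulus {x ∈ ℝ³ : 2 ≤ ‖x‖ ≤ 2.52} with pairwise distances ≥ 2 one has ∑_{v ∈ V} L(‖v‖/2) ≤ 12 — then every finite packing V with cardinality 13 contained in the closed annulus {x : 2 ≤ ‖x‖ ≤ 2√2} with pairwise distances ≥ 2 satisfies ∑_{v ∈ V} ‖v‖ ≥ 24 + 2·1.26 = 26.52. -/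
theorem norm_sum_ge_of_L12
    (hL12 : ∀ V : Finset (EuclideanSpace ℝ (Fin 3)),
      (∀ v ∈ V, 2 ≤ ‖v‖ ∧ ‖v‖ ≤ 2.52) →
      (∀ u ∈ V, ∀ v ∈ V, u ≠ v → 2 ≤ ‖u - v‖) →
      (∑ v ∈ V, Ltrunc (‖v‖ / 2)) ≤ 12) :
    ∀ V : Finset (EuclideanSpace ℝ (Fin 3)), V.card = 13 →
      (∀ v ∈ V, 2 ≤ ‖v‖ ∧ ‖v‖ ≤ 2 * Real.sqrt 2) →
      (∀ u ∈ V, ∀ v ∈ V, u ≠ v → 2 ≤ ‖u - v‖) →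
      26.52 ≤ ∑ v ∈ V, ‖v‖ := by
  intro V hcard hann hsep
  set V' := V.filter (fun v => ‖v‖ ≤ 2.52) with hV'
  have hsub : V' ⊆ V := Finset.filter_subset _ _
  have hsum12 : (∑ v ∈ V, Ltrunc (‖v‖ / 2)) ≤ 12 := by
    have heq : (∑ v ∈ V, Ltrunc (‖v‖ / 2)) = ∑ v ∈ V', Ltrunc (‖v‖ / 2) := by
      refine (Finset.sum_subset hsub ?_).symm
      intro v hv hnv
      have : ¬ ‖v‖ ≤ 2.52 := by
        intro h
        exact hnv (Finset.mem_filter.mpr ⟨hv, h⟩)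
      have h1 : ¬ ‖v‖ / 2 ≤ 1.26 := by
        intro h; apply this; linarith
      simp [Ltrunc, h1]
    rw [heq]
    refine hL12 V' ?_ ?_
    · intro v hv
      rcases Finset.mem_filter.mp hv with ⟨hvV, hle⟩
      exact ⟨(hann v hvV).1, hle⟩
    · intro u hu v hv huv
      exact hsep u (hsub hu) v (hsub hv) huv
  have key : ∀ v ∈ V, 2.52 - 0.52 * Ltrunc (‖v‖ / 2) ≤ ‖v‖ := by
    intro v hv
    have h2 := (hann v hv).1
    by_cases h : ‖v‖ / 2 ≤ 1.26
    · simp only [Ltrunc, if_pos h]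
      norm_num
      linarith
    · simp only [Ltrunc, if_neg h]
      push_neg at h
      linarith
  have hsumkey : ∑ v ∈ V, (2.52 - 0.52 * Ltrunc (‖v‖ / 2)) ≤ ∑ v ∈ V, ‖v‖ :=
    Finset.sum_le_sum key
  rw [Finset.sum_sub_distrib, Finset.sum_const, hcard, ← Finset.mul_sum] at hsumkey
  simp only [nsmul_eq_mul] at hsumkey
  linarith
end
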